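/- Let X be a set, H = ℓ²(X), and κ ⊆ X × X. Let S(κ) be the weak*-closed span of the matrix units E_{x,y} for (x,y) ∈ κ. Then an operator T ∈ B(H) belongs to S(κ) if and only if its matrix entries satisfy ⟨T e_y, e_x⟩ = 0 for all (x,y) ∉ κ. -/

import Mathlib

/-!
Each matrix coefficient `A ↦ ⟪e_x, A e_y⟫` is a WOT-continuous linear functional, so it vanishes
on the closed span `S(κ)` as soon as it vanishes on the generators `E_{a,b}`, `(a, b) ∈ κ`.
Conversely, if the entries of `T` vanish off `κ`, its finite compressions
`P_F T P_F = ∑_{x,y ∈ F} T_{x,y} E_{x,y}` lie in the span of those generators, and they converge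
to `T` in the weak operator topology because `P_F → 1` strongly as `F` grows.
-/

open scoped InnerProductSpace

noncomputable section

/-- The canonical basis vector `e_x` of `ℓ²(X)`. -/
def basisVec {X : Type*} [DecidableEq X] (x : X) : lp (fun _ : X => ℂ) 2 :=
  lp.single 2 x 1

/-- The matrix unit `E_{x,y}` on `ℓ²(X)`, sending `e_y` to `e_x`. -/
def matrixUnit {X : Type*} [DecidableEq X] (x y : X) :
    lp (fun _ : X => ℂ) 2 →L[ℂ] lp (fun _ : X => ℂ) 2 :=
  (innerSL ℂ (basisVec y)).smulRight (basisVec x)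

/-- `S(κ)`: the weak*-closed (weak operator topology closed) span of the matrix units
`E_{x,y}`, `(x,y) ∈ κ`, in `B(ℓ²(X))`. -/
def schurSystem {X : Type*} [DecidableEq X] (κ : Set (X × X)) :
    Set (lp (fun _ : X => ℂ) 2 →L[ℂ] lp (fun _ : X => ℂ) 2) :=
  let H := lp (fun _ : X => ℂ) 2
  {T : H →L[ℂ] H | (ContinuousLinearMapWOT.linearEquiv (σ := RingHom.id ℂ) (E := H) (F := H) ℂ).symm T ∈
    closure (Submodule.span ℂ
      ((ContinuousLinearMapWOT.linearEquiv (σ := RingHom.id ℂ) (E := H) (F := H) ℂ).symm ''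
        {A : H →L[ℂ] H | ∃ x y, (x, y) ∈ κ ∧ A = matrixUnit x y}) : Set (_ →WOT[ℂ] _))}

open Filter Topology

namespace ContinuousLinearMapWOT

variable {𝕜 E F : Type*} [RCLike 𝕜] [NormedAddCommGroup E] [InnerProductSpace 𝕜 E]
  [NormedAddCommGroup F] [InnerProductSpace 𝕜 F]

def innerApplyCLM (u : F) (v : E) : (E →WOT[𝕜] F) →L[𝕜] 𝕜 where
  toLinearMap := (LinearMap.proj (v, innerSL 𝕜 u)).comp (inducingFn (RingHom.id 𝕜) E F)
  cont := continuous_dual_apply v (innerSL 𝕜 u)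

lemma inner_apply_eq_zero_of_mem_closure_span {s : Set (E →WOT[𝕜] F)} {u : F} {v : E}
    (hs : ∀ A ∈ s, ⟪u, A v⟫_𝕜 = 0) {T : E →WOT[𝕜] F}
    (hT : T ∈ closure (Submodule.span 𝕜 s : Set (E →WOT[𝕜] F))) : ⟪u, T v⟫_𝕜 = 0 :=
  Submodule.topologicalClosure_minimal _ (Submodule.span_le.mpr fun A hA => hs A hA)
    (innerApplyCLM u v).isClosed_ker hT

end ContinuousLinearMapWOT

section

variable {X : Type*} [DecidableEq X]

local notation "ℓ²(" X ")" => lp (fun _ : X => ℂ) 2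

open ContinuousLinearMapWOT

lemma inner_basisVec_left (a : X) (f : ℓ²(X)) : ⟪basisVec a, f⟫_ℂ = f a := by
  simp [basisVec, lp.inner_single_left]

lemma inner_basisVec_right (a : X) (f : ℓ²(X)) : ⟪f, basisVec a⟫_ℂ = starRingEnd ℂ (f a) := by
  simp [basisVec, lp.inner_single_right]

lemma basisVec_apply (a b : X) : basisVec a b = if b = a then 1 else 0 := by
  simp [basisVec, lp.single_apply, Pi.single_apply]

lemma matrixUnit_apply (a b : X) (f : ℓ²(X)) :
    matrixUnit a b f = ⟪basisVec b, f⟫_ℂ • basisVec a := rfl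

lemma inner_basisVec_matrixUnit_basisVec (x y a b : X) :
    ⟪basisVec x, matrixUnit a b (basisVec y)⟫_ℂ = if x = a ∧ y = b then 1 else 0 := by
  simp only [matrixUnit_apply, inner_smul_right, inner_basisVec_left, basisVec_apply]
  by_cases hxa : x = a <;> by_cases hyb : y = b <;> simp [hxa, hyb, eq_comm]

lemma hasSum_smul_basisVec (f : ℓ²(X)) : HasSum (fun a => f a • basisVec a) f := by
  simpa [basisVec, ← lp.single_smul] using lp.hasSum_single (by norm_num) f

/-- The compression `P_F T P_F`, `P_F` the orthogonal projection onto `span {e_x | x ∈ F}`. -/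
def matrixTruncation (T : ℓ²(X) →L[ℂ] ℓ²(X)) (F : Finset X) : ℓ²(X) →L[ℂ] ℓ²(X) :=
  ∑ p ∈ F ×ˢ F, ⟪basisVec p.1, T (basisVec p.2)⟫_ℂ • matrixUnit p.1 p.2

lemma inner_matrixTruncation_apply (T : ℓ²(X) →L[ℂ] ℓ²(X)) (F : Finset X) (u v : ℓ²(X)) :
    ⟪u, matrixTruncation T F v⟫_ℂ
      = ⟪∑ a ∈ F, u a • basisVec a, T (∑ b ∈ F, v b • basisVec b)⟫_ℂ := by
  simp only [matrixTruncation, FunLike.coe_sum, Finset.sum_apply, FunLike.coe_smul, Pi.smul_apply,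
    matrixUnit_apply, map_sum, map_smul, inner_sum, sum_inner, inner_smul_left,
    inner_smul_right, inner_basisVec_left, inner_basisVec_right, Finset.sum_product, Finset.mul_sum]
  rw [Finset.sum_comm]
  refine Finset.sum_congr rfl fun a _ => Finset.sum_congr rfl fun b _ => ?_
  ring

lemma tendsto_ofCLM_matrixTruncation (T : ℓ²(X) →L[ℂ] ℓ²(X)) :
    Tendsto (fun F => ofCLM (matrixTruncation T F)) atTop (𝓝 (ofCLM T)) := by
  refine tendsto_iff_forall_inner_apply_tendsto.mpr fun v u => ?_
  simp only [ofCLM_apply, inner_matrixTruncation_apply]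
  exact (hasSum_smul_basisVec u).inner ((T.continuous.tendsto v).comp (hasSum_smul_basisVec v))

lemma ofCLM_matrixTruncation_mem_span {κ : Set (X × X)} {T : ℓ²(X) →L[ℂ] ℓ²(X)}
    (hT : ∀ x y, (x, y) ∉ κ → ⟪basisVec x, T (basisVec y)⟫_ℂ = 0) (F : Finset X) :
    ofCLM (matrixTruncation T F) ∈
      Submodule.span ℂ (ofCLM '' {A | ∃ x y, (x, y) ∈ κ ∧ A = matrixUnit x y}) := by
  refine Submodule.apply_mem_span_image_of_mem_span
    (linearEquiv (σ := RingHom.id ℂ) (E := ℓ²(X)) (F := ℓ²(X)) ℂ).symm.toLinearMap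
    (Submodule.sum_mem _ fun p _ => ?_)
  by_cases hp : (p.1, p.2) ∈ κ
  · exact Submodule.smul_mem _ _ (Submodule.subset_span ⟨p.1, p.2, hp, rfl⟩)
  · simp [hT p.1 p.2 hp]

lemma mem_schurSystem_iff {κ : Set (X × X)} {T : ℓ²(X) →L[ℂ] ℓ²(X)} :
    T ∈ schurSystem κ ↔ ofCLM T ∈ closure (Submodule.span ℂ
      (ofCLM '' {A | ∃ x y, (x, y) ∈ κ ∧ A = matrixUnit x y}) : Set (ℓ²(X) →WOT[ℂ] ℓ²(X))) :=
  Iff.rfl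

end

/-- `T ∈ S(κ)` iff the matrix entries `⟨T e_y, e_x⟩` of `T` vanish off `κ`. -/
theorem stmt_8 {X : Type*} [DecidableEq X] (κ : Set (X × X))
    (T : lp (fun _ : X => ℂ) 2 →L[ℂ] lp (fun _ : X => ℂ) 2) :
    T ∈ schurSystem κ ↔ ∀ x y : X, (x, y) ∉ κ → ⟪basisVec x, T (basisVec y)⟫_ℂ = 0 := by
  rw [mem_schurSystem_iff]
  constructor
  · intro hT x y hxy
    refine ContinuousLinearMapWOT.inner_apply_eq_zero_of_mem_closure_span ?_ hT
    rintro _ ⟨_, ⟨a, b, hab, rfl⟩, rfl⟩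
    simp only [ContinuousLinearMapWOT.ofCLM_apply, inner_basisVec_matrixUnit_basisVec]
    rw [if_neg]
    rintro ⟨rfl, rfl⟩
    exact hxy hab
  · intro hT
    refine mem_closure_of_tendsto (tendsto_ofCLM_matrixTruncation T) (.of_forall fun F => ?_)
    exact ofCLM_matrixTruncation_mem_span hT F

end
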